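/- Assume ξ is not in the image of the norm map N_{L/k} : L^× → k^×, where N_{L/k}(x) = x·g(x)·g²(x). Then every nonzero matrix A ∈ D := {A ∈ Mat₃(L) : A^g = A_g⁻¹·A·A_g} is invertible in Mat₃(L), and its inverse again lies in D; in other words, D is a division algebra over k. -/

import Mathlib

/-!
A matrix `A` satisfies `A^g = A_g⁻¹ A A_g` exactly when it commutes with the `g`-semilinear map
`φ v = A_g · g(v)` of `L³`, and `φ³ = ξ` because `A_g³ = ξ` and `g³ = 1`. If such an `A ≠ 0` were
singular, its kernel or its image would be a `φ`-stable line `L w`; writing `φ w = c w` gives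
`ξ w = φ³ w = c · g(c) · g²(c) w`, so `ξ` would be the norm of `c`.
-/

open Matrix Finset Module

theorem Submodule.exists_ne_zero_eq_smul_of_finrank_eq_one {K V : Type*} [Field K]
    [AddCommGroup V] [Module K V] {W : Submodule K V} (hW : finrank K W = 1) {f : V → V}
    (hf : ∀ v ∈ W, f v ∈ W) : ∃ w ≠ 0, ∃ c : K, f w = c • w := by
  obtain ⟨w, hw0, hspan⟩ := finrank_eq_one_iff'.1 hW
  obtain ⟨c, hc⟩ := hspan ⟨f w, hf w w.2⟩
  exact ⟨w, by simpa using hw0, c, by simpa using congrArg Subtype.val hc.symm⟩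

namespace Matrix

section TwistedMulVec

variable {K n : Type*} [Field K] [Fintype n]

def twistedMulVec (σ : K →+* K) (P : Matrix n n K) (v : n → K) : n → K :=
  P *ᵥ (σ ∘ v)

variable {σ : K →+* K} {P : Matrix n n K}

theorem twistedMulVec_smul (c : K) (v : n → K) :
    twistedMulVec σ P (c • v) = σ c • twistedMulVec σ P v := by
  have : σ ∘ (c • v) = σ c • (σ ∘ v) := by ext i; simp
  rw [twistedMulVec, twistedMulVec, this, mulVec_smul]

theorem twistedMulVec_mulVec {A : Matrix n n K} (hA : P * A.map σ = A * P) (v : n → K) :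
    twistedMulVec σ P (A *ᵥ v) = A *ᵥ twistedMulVec σ P v := by
  have : σ ∘ (A *ᵥ v) = A.map σ *ᵥ (σ ∘ v) := funext (RingHom.map_mulVec σ A v)
  rw [twistedMulVec, twistedMulVec, this, mulVec_mulVec, hA, mulVec_mulVec]

theorem twistedMulVec_iterate_of_eq_smul {w : n → K} {c : K}
    (hw : twistedMulVec σ P w = c • w) (m : ℕ) :
    (twistedMulVec σ P)^[m] w = (∏ i ∈ range m, (⇑σ)^[i] c) • w := by
  induction m with
  | zero => simp
  | succ m ih =>
    rw [Function.iterate_succ_apply', ih, twistedMulVec_smul, hw, smul_smul, prod_range_succ',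
      map_prod]
    simp only [← Function.iterate_succ_apply' σ, Function.iterate_zero_apply]

variable [DecidableEq n]

theorem twistedMulVec_iterate (hP : P.map σ = P) (m : ℕ) (v : n → K) :
    (twistedMulVec σ P)^[m] v = (P ^ m) *ᵥ ((⇑σ)^[m] ∘ v) := by
  induction m with
  | zero => simp
  | succ m ih =>
    have hPm : P * (P ^ m).map σ = P ^ m * P := by rw [Matrix.map_pow, hP, pow_mul_comm']
    rw [Function.iterate_succ_apply', ih, twistedMulVec_mulVec hPm, twistedMulVec, pow_succ,
      ← mulVec_mulVec, Function.iterate_succ', Function.comp_assoc]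

theorem prod_iterate_eq_of_twistedMulVec_eq_smul {m : ℕ} {ξ : K} (hP : P.map σ = P)
    (hPm : P ^ m = ξ • 1) (hσ : ∀ x, (⇑σ)^[m] x = x) {w : n → K} (hw0 : w ≠ 0) {c : K}
    (hw : twistedMulVec σ P w = c • w) :
    ∏ i ∈ range m, (⇑σ)^[i] c = ξ := by
  refine smul_left_injective K hw0 ?_
  have hσw : (⇑σ)^[m] ∘ w = w := funext fun i => hσ (w i)
  change (∏ i ∈ range m, (⇑σ)^[i] c) • w = ξ • w
  rw [← twistedMulVec_iterate_of_eq_smul hw, twistedMulVec_iterate hP, hσw, hPm, smul_mulVec,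
    one_mulVec]

end TwistedMulVec

theorem finrank_ker_eq_one_or_finrank_range_eq_one {K : Type*} [Field K]
    {A : Matrix (Fin 3) (Fin 3) K} (hA0 : A ≠ 0) (hA : ¬IsUnit A) :
    finrank K (LinearMap.ker A.mulVecLin) = 1 ∨ finrank K (LinearMap.range A.mulVecLin) = 1 := by
  have hsum := LinearMap.finrank_range_add_finrank_ker A.mulVecLin
  rw [finrank_fin_fun] at hsum
  have hrange : finrank K (LinearMap.range A.mulVecLin) ≠ 0 := by
    rw [Ne, Submodule.finrank_eq_zero, LinearMap.range_eq_bot]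
    exact fun h => hA0 (toLin'.injective (by rw [map_zero]; exact h))
  have hker : finrank K (LinearMap.ker A.mulVecLin) ≠ 0 := by
    rw [Ne, Submodule.finrank_eq_zero, LinearMap.ker_eq_bot]
    exact fun h => hA (mulVec_injective_iff_isUnit.1 h)
  omega

theorem map_nonsing_inv {K L n : Type*} [Field K] [Field L] [Fintype n] [DecidableEq n]
    (f : K →+* L) (A : Matrix n n K) : A⁻¹.map f = (A.map f)⁻¹ := by
  have hdet : (A.map f).det = f A.det := (f.map_det A).symm
  have hadj : (A.map f).adjugate = A.adjugate.map f := (f.map_adjugate A).symm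
  ext i j
  simp [inv_def, hdet, hadj, Ring.inverse_eq_inv']

theorem isUnit_of_mul_map_eq_mul {K : Type*} [Field K] {σ : K →+* K}
    {P A : Matrix (Fin 3) (Fin 3) K} {ξ : K} (hξ : ξ ≠ 0) (hP : P.map σ = P) (hP3 : P ^ 3 = ξ • 1)
    (hσ : ∀ x, σ (σ (σ x)) = x) (hnorm : ¬ ∃ x : K, x ≠ 0 ∧ x * σ x * σ (σ x) = ξ)
    (hA : P * A.map σ = A * P) (hA0 : A ≠ 0) : IsUnit A := by
  by_contra hunit
  obtain ⟨W, hW, hWstable⟩ : ∃ W : Submodule K (Fin 3 → K),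
      finrank K W = 1 ∧ ∀ v ∈ W, twistedMulVec σ P v ∈ W := by
    rcases finrank_ker_eq_one_or_finrank_range_eq_one hA0 hunit with hker | hrange
    · refine ⟨_, hker, fun v hv => ?_⟩
      rw [LinearMap.mem_ker, mulVecLin_apply] at hv ⊢
      rw [← twistedMulVec_mulVec hA, hv, twistedMulVec]
      simp
    · refine ⟨_, hrange, ?_⟩
      rintro _ ⟨v, rfl⟩
      exact ⟨twistedMulVec σ P v, (twistedMulVec_mulVec hA v).symm⟩
  obtain ⟨w, hw0, c, hw⟩ := Submodule.exists_ne_zero_eq_smul_of_finrank_eq_one hW hWstable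
  have hN := prod_iterate_eq_of_twistedMulVec_eq_smul hP hP3 hσ hw0 hw
  simp only [prod_range_succ, prod_range_zero, one_mul, Function.iterate_zero_apply,
    Function.iterate_succ_apply'] at hN
  exact hnorm ⟨c, fun hc => hξ (by simpa [hc] using hN.symm), hN⟩

end Matrix

theorem stmt_5 (k L : Type*) [Field k] [Field L] [Algebra k L] [IsGalois k L]
    (hdeg : Module.finrank k L = 3)
    (g : L ≃ₐ[k] L)
    (ξ : k) (hξ : ξ ≠ 0)
    (hnorm : ¬ ∃ x : L, x ≠ 0 ∧ x * g x * g (g x) = algebraMap k L ξ)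
    (A : Matrix (Fin 3) (Fin 3) L)
    (hA : A.map ⇑g =
        (!![0, 0, algebraMap k L ξ; 1, 0, 0; 0, 1, 0])⁻¹ * A *
          !![0, 0, algebraMap k L ξ; 1, 0, 0; 0, 1, 0])
    (hA0 : A ≠ 0) :
    IsUnit A ∧
      A⁻¹.map ⇑g =
        (!![0, 0, algebraMap k L ξ; 1, 0, 0; 0, 1, 0])⁻¹ * A⁻¹ *
          !![0, 0, algebraMap k L ξ; 1, 0, 0; 0, 1, 0] := by
  set e : Matrix (Fin 3) (Fin 3) L := !![0, 0, algebraMap k L ξ; 1, 0, 0; 0, 1, 0]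
  have hξ' : algebraMap k L ξ ≠ 0 := (FaithfulSMul.algebraMap_eq_zero_iff k L).not.2 hξ
  have he : IsUnit e.det := by simpa [e, det_fin_three] using hξ'
  have he_map : e.map g = e := by
    ext i j; fin_cases i <;> fin_cases j <;> simp [e]
  have he3 : e ^ 3 = algebraMap k L ξ • 1 := by
    ext i j; fin_cases i <;> fin_cases j <;>
      simp [e, pow_succ, mul_apply, Fin.sum_univ_three, Algebra.algebraMap_eq_smul_one]
  have hg3 : ∀ x, g (g (g x)) = x := by
    have : FiniteDimensional k L := Module.finite_of_finrank_pos (by omega)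
    have h3 : g ^ 3 = 1 := by
      rw [← hdeg, ← IsGalois.card_aut_eq_finrank]; exact pow_card_eq_one'
    exact fun x => by simpa [pow_succ] using AlgEquiv.ext_iff.1 h3 x
  have hA' : e * A.map g = A * e := by
    rw [hA, ← Matrix.mul_assoc, ← Matrix.mul_assoc, mul_nonsing_inv e he, Matrix.one_mul]
  refine ⟨isUnit_of_mul_map_eq_mul (σ := (g : L →+* L)) hξ' he_map he3 hg3 hnorm hA' hA0, ?_⟩
  calc A⁻¹.map g = (A.map g)⁻¹ := map_nonsing_inv (g : L →+* L) A
    _ = e⁻¹ * A⁻¹ * e := by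
      rw [hA, Matrix.mul_inv_rev, Matrix.mul_inv_rev, nonsing_inv_nonsing_inv e he,
        Matrix.mul_assoc]
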